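/- arXiv:0805.1234 — 4 statements merged into one kernel-verified Lean document; each statement's English description precedes it below -/
import Mathlib

section
/- Let φ: A → B be an injective homomorphism of finitely generated groups, suppose B is a subgroup of a group π, and let π̃ ⊆ π be a finite-index subgroup. Let g_1, …, g_k ∈ π be a complete set of representatives of the double cosets B\π/π̃, and for i = 1, …, k set B̃_i = B ∩ g_i π̃ g_i⁻¹ and Ã_i = φ⁻¹(B̃_i). Then the induced map φ_*: H_0(A; ℤ[π/π̃]) → H_0(B; ℤ[π/π̃]) on zeroth group homology is a surjection, and it is a bijection if and only if for every i the induced map of left coset spaces A/Ã_i → B/B̃_i is a bijection. -/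
noncomputable section

namespace FV

variable {A B : Type} [Group A] [Group B] {M : Type} [AddCommGroup M]

/-- The group structure on `AddAut M` with multiplication given by composition, as in the
older library (where `AddAut M` was a multiplicative group). -/
instance addAutGroup (M : Type) [AddCommGroup M] : Group (AddAut M) where
  mul g h := AddEquiv.trans h g
  one := AddEquiv.refl _
  inv := AddEquiv.symm
  mul_assoc _ _ _ := rfl
  one_mul _ := rfl
  mul_one _ := rfl
  inv_mul_cancel := AddEquiv.self_trans_symm

/-- An action of the group `A` on the abelian group `M` by additive automorphisms,
i.e. a `ℤ[A]`-module structure on `M`. -/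
abbrev Rep (A M : Type) [Group A] [AddCommGroup M] := A →* AddAut M

/-- The boundary map `C₁ → C₀` of the inhomogeneous chain complex computing the group homology
of `A` with coefficients in `M`; on a generator `a ⊗ m` it is `a⁻¹ • m - m`. -/
def d1 (ρ : Rep A M) : (A →₀ M) →+ M :=
  Finsupp.liftAddHom fun a => (ρ a⁻¹).toAddMonoidHom - AddMonoidHom.id M

/-- The boundary map `C₂ → C₁`; on a generator `(a₁, a₂) ⊗ m` it is
`a₂ ⊗ a₁⁻¹ • m - (a₁a₂) ⊗ m + a₁ ⊗ m`. -/
def d2 (ρ : Rep A M) : (A × A →₀ M) →+ (A →₀ M) :=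
  Finsupp.liftAddHom fun p => (Finsupp.singleAddHom p.2).comp (ρ p.1⁻¹).toAddMonoidHom
    - Finsupp.singleAddHom (p.1 * p.2) + Finsupp.singleAddHom p.1

/-- Zeroth group homology `H₀(A; M)`, the coinvariants of the action. -/
abbrev H0 (ρ : Rep A M) := M ⧸ (d1 ρ).range

/-- One-cycles. -/
abbrev Z1 (ρ : Rep A M) : AddSubgroup (A →₀ M) := (d1 ρ).ker

/-- First group homology `H₁(A; M)`: one-cycles modulo one-boundaries. -/
abbrev H1 (ρ : Rep A M) := Z1 ρ ⧸ ((d2 ρ).range.addSubgroupOf (Z1 ρ))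

lemma d1_comp (φ : A →* B) (ρ : Rep B M) :
    d1 (ρ.comp φ) = (d1 ρ).comp (Finsupp.mapDomain.addMonoidHom φ) := by
  refine Finsupp.addHom_ext fun a m => ?_
  simp [d1, Finsupp.mapDomain.addMonoidHom_apply, Finsupp.mapDomain_single]

lemma d2_comp (φ : A →* B) (ρ : Rep B M) :
    (Finsupp.mapDomain.addMonoidHom φ).comp (d2 (ρ.comp φ))
      = (d2 ρ).comp (Finsupp.mapDomain.addMonoidHom (Prod.map φ φ)) := by
  refine Finsupp.addHom_ext fun p m => ?_
  simp only [AddMonoidHom.comp_apply, d2, Finsupp.liftAddHom_apply_single,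
    AddMonoidHom.sub_apply, AddMonoidHom.add_apply, Finsupp.singleAddHom_apply, map_add, map_sub]
  simp [Finsupp.mapDomain.addMonoidHom_apply, Finsupp.mapDomain_single]

/-- The map `H₀(A; M) → H₀(B; M)` induced by a homomorphism `φ : A → B`, where `A` acts on the
`B`-module `M` through `φ`. -/
def H0Map (φ : A →* B) (ρ : Rep B M) : H0 (ρ.comp φ) →+ H0 ρ :=
  QuotientAddGroup.map _ _ (AddMonoidHom.id M) (by
    rw [d1_comp φ ρ]
    rintro x ⟨y, rfl⟩
    exact ⟨Finsupp.mapDomain.addMonoidHom φ y, rfl⟩)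

/-- The map on one-cycles induced by `φ`. -/
def Z1Map (φ : A →* B) (ρ : Rep B M) : Z1 (ρ.comp φ) →+ Z1 ρ :=
  ((Finsupp.mapDomain.addMonoidHom φ).domRestrict (Z1 (ρ.comp φ))).codRestrict (Z1 ρ)
    (by
      rintro ⟨x, hx⟩
      have hx' : d1 (ρ.comp φ) x = 0 := hx
      rw [d1_comp φ ρ] at hx'
      exact hx')

/-- The map `H₁(A; M) → H₁(B; M)` induced by a homomorphism `φ : A → B`, where `A` acts on the
`B`-module `M` through `φ`. -/
def H1Map (φ : A →* B) (ρ : Rep B M) : H1 (ρ.comp φ) →+ H1 ρ :=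
  QuotientAddGroup.map _ _ (Z1Map φ ρ) (by
    rintro ⟨x, hx⟩ hmem
    obtain ⟨y, hy⟩ := hmem
    refine ⟨Finsupp.mapDomain.addMonoidHom (Prod.map φ φ) y, ?_⟩
    have h2 := DFunLike.congr_fun (d2_comp φ ρ) y
    simp only [AddMonoidHom.comp_apply] at h2
    rw [hy] at h2
    exact h2.symm)

/-- The permutation representation: `G` acting on the free abelian group `ℤ[X]` on a `G`-set
`X` by permuting basis elements. -/
def permRep (G X : Type) [Group G] [MulAction G X] : Rep G (X →₀ ℤ) where
  toFun g := Finsupp.domCongr (MulAction.toPerm g)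
  map_one' := by
    ext f x
    show _ = f x
    simp
  map_mul' g h := by
    ext f x
    show _ = Finsupp.domCongr _ (Finsupp.domCongr _ f) x
    simp [mul_smul]

end FV

namespace FV

variable {A B : Type} [Group A] [Group B]

/-- The map of left coset spaces `A/J → B/K` induced by a homomorphism `φ : A → B`
with `φ(J) ⊆ K`. -/
def cosetMap (φ : A →* B) (J : Subgroup A) (K : Subgroup B) (h : J ≤ K.comap φ) :
    A ⧸ J → B ⧸ K :=
  Quotient.map' φ fun a a' hr => by
    rw [QuotientGroup.leftRel_apply] at hr ⊢
    simpa using h hr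

lemma commutator_comap_le (φ : A →* B) (K : Subgroup B) :
    ⁅K.comap φ, K.comap φ⁆ ≤ (⁅K, K⁆).comap φ := by
  rw [← Subgroup.map_le_iff_le_comap, Subgroup.map_commutator]
  exact Subgroup.commutator_mono (Subgroup.map_comap_le φ K) (Subgroup.map_comap_le φ K)

end FV

/-
`H₀(G; ℤ[X])` is the free abelian group on the `G`-orbits of `X`, and `φ_*` is induced by the
identity of `ℤ[π/π̃]`, so it is onto, and it is injective exactly when the `A`-orbits and the
`B`-orbits on `π/π̃` coincide. The `B`-orbits are the sets `B gᵢπ̃ ≅ B/B̃ᵢ`, since `B̃ᵢ` is the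
stabiliser of `gᵢπ̃`; `A` is transitive on `B gᵢπ̃` iff `A → B/B̃ᵢ` is onto, and
`A/Ãᵢ → B/B̃ᵢ` is always injective because `Ãᵢ = φ⁻¹(B̃ᵢ)`.
-/

namespace FV

section Coinvariants

variable {A B M : Type} [Group A] [Group B] [AddCommGroup M]

lemma H0Map_surjective (φ : A →* B) (ρ : Rep B M) : Function.Surjective (H0Map φ ρ) := by
  intro y
  induction y using QuotientAddGroup.induction_on with
  | H m => exact ⟨m, rfl⟩

lemma H0Map_injective_iff (φ : A →* B) (ρ : Rep B M) :
    Function.Injective (H0Map φ ρ) ↔ (d1 ρ).range ≤ (d1 (ρ.comp φ)).range := by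
  rw [injective_iff_map_eq_zero]
  constructor
  · intro h m hm
    exact (QuotientAddGroup.eq_zero_iff m).1 (h _ ((QuotientAddGroup.eq_zero_iff m).2 hm))
  · intro h x
    induction x using QuotientAddGroup.induction_on with
    | H m =>
      intro hm
      exact (QuotientAddGroup.eq_zero_iff m).2 (h ((QuotientAddGroup.eq_zero_iff m).1 hm))

end Coinvariants

lemma ker_mapDomain_le_ker_mapDomain_iff {X M : Type} [AddCommGroup M] [Nontrivial M]
    {s t : Setoid X} :
    (Finsupp.mapDomain.addMonoidHom (Quotient.mk s) : (X →₀ M) →+ _).ker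
      ≤ (Finsupp.mapDomain.addMonoidHom (Quotient.mk t) : (X →₀ M) →+ _).ker ↔ s ≤ t := by
  constructor
  · intro h x y hxy
    obtain ⟨m, hm⟩ := exists_ne (0 : M)
    have hker : Finsupp.single x m - Finsupp.single y m ∈
        (Finsupp.mapDomain.addMonoidHom (Quotient.mk s) : (X →₀ M) →+ _).ker := by
      rw [AddMonoidHom.mem_ker, map_sub, Finsupp.mapDomain.addMonoidHom_apply,
        Finsupp.mapDomain.addMonoidHom_apply, Finsupp.mapDomain_single, Finsupp.mapDomain_single,
        Quotient.sound hxy, sub_self]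
    have h0 := h hker
    simp only [AddMonoidHom.mem_ker, map_sub, Finsupp.mapDomain.addMonoidHom_apply,
      Finsupp.mapDomain_single, sub_eq_zero, Finsupp.single_left_inj hm] at h0
    exact Quotient.exact h0
  · intro hst f hf
    rw [AddMonoidHom.mem_ker, Finsupp.mapDomain.addMonoidHom_apply] at hf ⊢
    have hcomp : Setoid.map_of_le hst ∘ Quotient.mk s = Quotient.mk t := rfl
    rw [← hcomp, Finsupp.mapDomain_comp, hf, Finsupp.mapDomain_zero]

section PermutationModule

variable {G P X : Type} [Group G] [Group P] [MulAction P X]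

lemma mem_orbit_range_iff (σ : G →* P) {x y : X} :
    y ∈ MulAction.orbit σ.range x ↔ ∃ g, σ g • x = y := by
  simp only [MulAction.mem_orbit_iff, Subtype.exists, MonoidHom.mem_range, Subgroup.mk_smul,
    exists_prop, exists_exists_eq_and]

lemma d1_permRep_comp_single (σ : G →* P) (a : G) (m : X →₀ ℤ) :
    d1 ((permRep P X).comp σ) (Finsupp.single a m)
      = Finsupp.mapDomain (σ a⁻¹ • ·) m - m := by
  simp only [d1, Finsupp.liftAddHom_apply_single, AddMonoidHom.sub_apply, AddMonoidHom.id_apply]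
  congr 1
  exact Finsupp.equivMapDomain_eq_mapDomain (MulAction.toPerm (σ a⁻¹)) m

lemma range_d1_permRep_comp (σ : G →* P) :
    (d1 ((permRep P X).comp σ)).range
      = (Finsupp.mapDomain.addMonoidHom (Quotient.mk (MulAction.orbitRel σ.range X)) :
          (X →₀ ℤ) →+ _).ker := by
  set s := MulAction.orbitRel σ.range X
  apply le_antisymm
  · rintro _ ⟨f, rfl⟩
    rw [AddMonoidHom.mem_ker, Finsupp.mapDomain.addMonoidHom_apply]
    induction f using Finsupp.induction_linear with
    | zero => simp
    | add f f' hf hf' => rw [map_add, Finsupp.mapDomain_add, hf, hf', add_zero]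
    | single a m =>
      have hinv : Quotient.mk s ∘ (σ a⁻¹ • ·) = Quotient.mk s := funext fun x =>
        Quotient.sound ((mem_orbit_range_iff σ).2 ⟨a⁻¹, rfl⟩)
      rw [d1_permRep_comp_single, Finsupp.mapDomain_sub, ← Finsupp.mapDomain_comp, hinv,
        sub_self]
  · intro f hf
    rw [AddMonoidHom.mem_ker, Finsupp.mapDomain.addMonoidHom_apply] at hf
    -- moving every point to the chosen representative of its orbit changes `f` by a boundary
    have hmove : ∀ f : X →₀ ℤ,
        f - Finsupp.mapDomain (fun x => (Quotient.mk s x).out) f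
          ∈ (d1 ((permRep P X).comp σ)).range := by
      intro f
      induction f using Finsupp.induction_linear with
      | zero => simp
      | add f f' hf hf' =>
        rw [Finsupp.mapDomain_add, add_sub_add_comm]
        exact add_mem hf hf'
      | single x n =>
        obtain ⟨g, hg⟩ := (mem_orbit_range_iff σ).1 (Quotient.mk_out (s := s) x)
        refine ⟨Finsupp.single g (Finsupp.single (Quotient.mk s x).out n), ?_⟩
        rw [d1_permRep_comp_single, Finsupp.mapDomain_single, Finsupp.mapDomain_single, map_inv,
          ← hg, inv_smul_smul]
    have hzero : Finsupp.mapDomain (fun x => (Quotient.mk s x).out) f = 0 := by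
      rw [show (fun x => (Quotient.mk s x).out) = Quotient.out ∘ Quotient.mk s from rfl,
        Finsupp.mapDomain_comp, hf, Finsupp.mapDomain_zero]
    simpa [hzero] using hmove f

end PermutationModule

lemma orbitRel_le_iff_forall_orbit_subset {P X ι : Type} [Group P] [MulAction P X]
    {H K : Subgroup P} (x : ι → X) (hx : ∀ y, ∃ i, y ∈ MulAction.orbit K (x i)) :
    MulAction.orbitRel K X ≤ MulAction.orbitRel H X
      ↔ ∀ i, MulAction.orbit K (x i) ⊆ MulAction.orbit H (x i) := by
  constructor
  · intro h i y hy
    exact h (MulAction.orbitRel_apply.2 hy)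
  · intro h y z hyz
    obtain ⟨i, hi⟩ := hx z
    have hy : y ∈ MulAction.orbit K (x i) := (MulAction.orbitRel K X).trans' hyz hi
    exact (MulAction.orbitRel H X).trans' (h i hy) ((MulAction.orbitRel H X).symm' (h i hi))

section Cosets

variable {A B : Type} [Group A] [Group B]

lemma cosetMap_mk (φ : A →* B) (J : Subgroup A) (K : Subgroup B) (h : J ≤ K.comap φ) (a : A) :
    cosetMap φ J K h a = φ a := rfl

lemma cosetMap_comap_bijective_iff (φ : A →* B) (K : Subgroup B) :
    Function.Bijective (cosetMap φ (K.comap φ) K le_rfl) ↔ ∀ b, ∃ a, (φ a)⁻¹ * b ∈ K := by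
  have hinj : Function.Injective (cosetMap φ (K.comap φ) K le_rfl) := by
    intro x y h
    induction x using QuotientGroup.induction_on
    induction y using QuotientGroup.induction_on
    rw [cosetMap_mk, cosetMap_mk, QuotientGroup.eq] at h
    rw [QuotientGroup.eq, Subgroup.mem_comap, map_mul, map_inv]
    exact h
  rw [Function.Bijective, and_iff_right hinj]
  constructor
  · intro h b
    obtain ⟨x, hx⟩ := h b
    induction x using QuotientGroup.induction_on with
    | H a => exact ⟨a, QuotientGroup.eq.1 hx⟩
  · intro h y
    induction y using QuotientGroup.induction_on with
    | H b =>
      obtain ⟨a, ha⟩ := h b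
      exact ⟨a, QuotientGroup.eq.2 ha⟩

lemma orbit_range_subset_iff_bijective_cosetMap {P X : Type} [Group P] [MulAction P X]
    (φ : A →* B) (ι : B →* P) (x : X) :
    MulAction.orbit ι.range x ⊆ MulAction.orbit (ι.comp φ).range x ↔
      Function.Bijective (cosetMap φ
        (((MulAction.stabilizer P x).comap ι).comap φ) ((MulAction.stabilizer P x).comap ι)
        le_rfl) := by
  rw [cosetMap_comap_bijective_iff]
  simp only [Set.subset_def, mem_orbit_range_iff, forall_exists_index, Subgroup.mem_comap,
    MulAction.mem_stabilizer_iff, MonoidHom.comp_apply, map_mul, map_inv, mul_smul,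
    inv_smul_eq_iff]
  rw [forall_comm]
  simp only [forall_eq']
  exact forall_congr' fun b => exists_congr fun a => eq_comm

end Cosets

lemma stabilizer_coe_quotient {G : Type} [Group G] (H : Subgroup G) (g : G) :
    MulAction.stabilizer G (g : G ⧸ H) = H.map (MulAut.conj g).toMonoidHom := by
  rw [show (g : G ⧸ H) = g • ((1 : G) : G ⧸ H) by simp,
    MulAction.stabilizer_smul_eq_stabilizer_map_conj, MulAction.stabilizer_quotient]

end FV

open FV

theorem stmt1_general (A B π : Type) [Group A] [Group B] [Group π]
    (φ : A →* B)
    (ι : B →* π)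
    (π' : Subgroup π)
    (k : ℕ) (g : Fin k → π)
    (hreps : ∀ x : π, ∃! i : Fin k, ∃ b : B, ∃ p ∈ π', x = ι b * g i * p) :
    Function.Surjective (H0Map φ ((permRep π (π ⧸ π')).comp ι)) ∧
    (Function.Bijective (H0Map φ ((permRep π (π ⧸ π')).comp ι)) ↔
      ∀ i : Fin k,
        Function.Bijective (cosetMap φ
          (((Subgroup.map (MulAut.conj (g i)).toMonoidHom π').comap ι).comap φ)
          ((Subgroup.map (MulAut.conj (g i)).toMonoidHom π').comap ι) le_rfl)) := by
  have hcover : ∀ y : π ⧸ π', ∃ i, y ∈ MulAction.orbit ι.range (g i : π ⧸ π') := by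
    intro y
    induction y using QuotientGroup.induction_on with
    | H x =>
      obtain ⟨i, ⟨b, p, hp, rfl⟩, -⟩ := hreps x
      exact ⟨i, (mem_orbit_range_iff ι).2 ⟨b, (QuotientGroup.mk_mul_of_mem _ hp).symm⟩⟩
  have hsurj := H0Map_surjective φ ((permRep π (π ⧸ π')).comp ι)
  refine ⟨hsurj, ?_⟩
  rw [Function.Bijective, and_iff_left hsurj, H0Map_injective_iff, MonoidHom.comp_assoc,
    range_d1_permRep_comp, range_d1_permRep_comp, ker_mapDomain_le_ker_mapDomain_iff,
    orbitRel_le_iff_forall_orbit_subset _ hcover]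
  refine forall_congr' fun i => ?_
  rw [orbit_range_subset_iff_bijective_cosetMap, stabilizer_coe_quotient]

/-- Let `φ : A → B` be a monomorphism of finitely generated groups, `B ≤ π`
(via the injection `ι`), and `π̃ ≤ π` of finite index, with `g₁, …, g_k` a complete set of
representatives of the double cosets `B\π/π̃`.  With `B̃ᵢ = B ∩ gᵢ π̃ gᵢ⁻¹` and
`Ãᵢ = φ⁻¹(B̃ᵢ)`, the induced map `φ⁎ : H₀(A; ℤ[π/π̃]) → H₀(B; ℤ[π/π̃])` is surjective, and it
is bijective iff each induced map of left coset spaces `A/Ãᵢ → B/B̃ᵢ` is bijective. -/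
theorem stmt1 (A B π : Type) [Group A] [Group.FG A] [Group B] [Group.FG B] [Group π]
    (φ : A →* B) (hφ : Function.Injective φ)
    (ι : B →* π) (hι : Function.Injective ι)
    (π' : Subgroup π) [π'.FiniteIndex]
    (k : ℕ) (g : Fin k → π)
    (hreps : ∀ x : π, ∃! i : Fin k, ∃ b : B, ∃ p ∈ π', x = ι b * g i * p) :
    Function.Surjective (H0Map φ ((permRep π (π ⧸ π')).comp ι)) ∧
    (Function.Bijective (H0Map φ ((permRep π (π ⧸ π')).comp ι)) ↔
      ∀ i : Fin k,
        Function.Bijective (cosetMap φ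
          (((Subgroup.map (MulAut.conj (g i)).toMonoidHom π').comap ι).comap φ)
          ((Subgroup.map (MulAut.conj (g i)).toMonoidHom π').comap ι) le_rfl)) :=
  stmt1_general A B π φ ι π' k g hreps
end
end

section
/- Let φ: A → B be a homomorphism of finitely generated groups such that for every finite solvable group S the precomposition map φ*: Hom(B,S) → Hom(A,S), ψ ↦ ψ ∘ φ, is a bijection. Then for every finite solvable group G and every homomorphism β: B → G, the image of β ∘ φ: A → G equals the image of β: B → G. -/
/-! Lift `β ∘ φ`, corestricted to its image `H`, along `φ` to some `ψ : B → H`; then `β` and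
`H.subtype ∘ ψ` agree after precomposition with `φ`, so they are equal and `im β ≤ H`. -/

theorem MonoidHom.range_comp_eq_range_of_lift {A B G : Type*} [Group A] [Group B] [Group G]
    (φ : A →* B) (β : B →* G) (hinj : Function.Injective fun ψ : B →* G => ψ.comp φ)
    (hlift : ∃ ψ : B →* (β.comp φ).range, ψ.comp φ = (β.comp φ).rangeRestrict) :
    (β.comp φ).range = β.range := by
  obtain ⟨ψ, hψ⟩ := hlift
  have hβ : (β.comp φ).range.subtype.comp ψ = β := hinj <| by
    simp only [MonoidHom.comp_assoc, hψ, MonoidHom.subtype_comp_rangeRestrict]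
  refine le_antisymm ?_ ?_
  · rw [MonoidHom.range_comp]
    exact Subgroup.map_le_range _ _
  · calc β.range = ((β.comp φ).range.subtype.comp ψ).range := by rw [hβ]
      _ ≤ (β.comp φ).range.subtype.range := by
        rw [MonoidHom.range_comp]
        exact Subgroup.map_le_range _ _
      _ = (β.comp φ).range := Subgroup.range_subtype _

theorem stmt7_general (A B : Type) [Group A] [Group B]
    (φ : A →* B)
    (h : ∀ (S : Type) [Group S] [Finite S] [Group.IsSolvable S],
      Function.Bijective fun ψ : B →* S => ψ.comp φ)
    (G : Type) [Group G] [Finite G] [Group.IsSolvable G] (β : B →* G) :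
    (β.comp φ).range = β.range :=
  MonoidHom.range_comp_eq_range_of_lift φ β (h G).injective ((h _).surjective _)

/-- If `φ : A → B` is a homomorphism of finitely generated groups inducing an
isomorphism of prosolvable completions (i.e. `Hom(B,S) → Hom(A,S)` is bijective for every
finite solvable `S`), then for every homomorphism `β : B → G` to a finite solvable group,
`im (β ∘ φ) = im β`. -/
theorem stmt7 (A B : Type) [Group A] [Group.FG A] [Group B] [Group.FG B]
    (φ : A →* B)
    (h : ∀ (S : Type) [Group S] [Finite S] [Group.IsSolvable S],
      Function.Bijective fun ψ : B →* S => ψ.comp φ)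
    (G : Type) [Group G] [Finite G] [Group.IsSolvable G] (β : B →* G) :
    (β.comp φ).range = β.range :=
  stmt7_general A B φ h G β
end

section
/- Let φ: A → B be a homomorphism of finitely generated groups such that for every finite solvable group S the precomposition map φ*: Hom(B,S) → Hom(A,S) is a bijection. Let β: B → G be a homomorphism to a finite solvable group G. Then φ restricts to a homomorphism φ': ker(β ∘ φ) → ker(β), and for every finite solvable group S the precomposition map (φ')*: Hom(ker(β), S) → Hom(ker(β∘φ), S) is a bijection. -/
/-!
If `β` has finite solvable image, every homomorphism `ψ : ker β → S` induces, via the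
Kaloujnine–Krasner embedding, a homomorphism `B → S ≀ G` whose value at `1 ∈ G` on `ker β`
recovers `ψ`; the wreath product is again finite solvable. Surjectivity: induce from
`ker (β ∘ φ)` to `A → S ≀ G` and extend along `φ`. Injectivity: the bijectivity hypothesis
forces `φ` to have dense image in every finite solvable quotient of `B` (test it on two maps
into `C₂ ≀ T` that differ by conjugation by an indicator function), and density passes to the
kernels through the induced maps.
-/

namespace FV

def kerRestrict {A B G : Type} [Group A] [Group B] [Group G] (φ : A →* B) (β : B →* G) :
    (β.comp φ).ker →* β.ker :=
  ((φ.domRestrict (β.comp φ).ker)).codRestrict β.ker fun x => by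
    have hx := x.2
    rw [MonoidHom.mem_ker] at hx ⊢
    simpa using hx

end FV

open FV Function

instance Pi.isSolvable {ι D : Type*} [Group D] [hD : Group.IsSolvable D] :
    Group.IsSolvable (ι → D) := by
  obtain ⟨n, hn⟩ := hD
  refine ⟨n, eq_bot_iff.mpr fun f hf => funext fun i => ?_⟩
  have hfi := map_derivedSeries_le_derivedSeries (Pi.evalMonoidHom (fun _ => D) i) n
    (Subgroup.mem_map_of_mem _ hf)
  rwa [hn] at hfi

theorem MonoidHom.range_comp_le_range {M N P : Type*} [Group M] [Group N] [Group P]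
    (g : N →* P) (f : M →* N) : (g.comp f).range ≤ g.range := by
  rw [range_comp]
  exact Subgroup.map_le_range ..

theorem MonoidHom.comp_injective_of_range_comp_eq {M N S : Type*} [Group M] [Group N] [Group S]
    (f : M →* N) (h : ∀ ψ : N →* S × S, (ψ.comp f).range = ψ.range) :
    Injective fun ψ : N →* S => ψ.comp f := by
  intro ψ₁ ψ₂ h_eq
  ext n
  obtain ⟨m, hm⟩ : ψ₁.prod ψ₂ n ∈ ((ψ₁.prod ψ₂).comp f).range := h _ ▸ ⟨n, rfl⟩
  obtain ⟨hm₁, hm₂⟩ := Prod.ext_iff.1 hm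
  calc ψ₁ n = ψ₁ (f m) := hm₁.symm
    _ = ψ₂ (f m) := DFunLike.congr_fun h_eq m
    _ = ψ₂ n := hm₂

namespace RegularWreathProduct

variable {D Q : Type*} [Group D] [Group Q]

instance [Group.IsSolvable D] [Group.IsSolvable Q] : Group.IsSolvable (D ≀ᵣ Q) :=
  Group.isSolvable_of_ker_le_range
    (MonoidHom.mk' (fun f => (⟨f, 1⟩ : D ≀ᵣ Q)) fun f g => by ext <;> simp)
    rightHom fun w hw => ⟨w.left, by ext <;> simp_all⟩

theorem commute_mk_one_inl_iff (f : Q → D) (q : Q) :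
    Commute (⟨f, 1⟩ : D ≀ᵣ Q) (inl q) ↔ ∀ x, f (q⁻¹ * x) = f x := by
  simp [Commute, SemiconjBy, RegularWreathProduct.ext_iff, funext_iff, eq_comm]

def ofCocycle {X : Type*} [Group X] (ρ : X →* Q) (c : X → Q → D)
    (hc : ∀ x y g, c (x * y) g = c x g * c y ((ρ x)⁻¹ * g)) : X →* D ≀ᵣ Q :=
  MonoidHom.mk' (fun x => ⟨c x, ρ x⟩) fun x y => by ext <;> simp [hc]

def kerEvalOne : (rightHom : D ≀ᵣ Q →* Q).ker →* D :=
  MonoidHom.mk' (fun w => (w : D ≀ᵣ Q).left 1) fun w w' => by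
    simp [show (w : D ≀ᵣ Q).right = 1 from w.2]

/-- Kaloujnine–Krasner: with a section `σ` of `ρ` normalised by `σ 1 = 1`, the cocycle is
`c x g = ψ ((σ g)⁻¹ * x * σ ((ρ x)⁻¹ * g))`. -/
theorem exists_comp_eq_rangeRestrict {X S G : Type*} [Group X] [Group S] [Group G]
    (ρ : X →* G) (ψ : ρ.ker →* S) :
    ∃ Θ : X →* S ≀ᵣ ρ.range,
      rightHom.comp Θ = ρ.rangeRestrict ∧ ∀ k : ρ.ker, (Θ k).left 1 = ψ k := by
  obtain ⟨σ, hσ, hσ_one⟩ : ∃ σ : ρ.range → X, RightInverse σ ρ.rangeRestrict ∧ σ 1 = 1 := by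
    obtain ⟨s, hs⟩ := ρ.rangeRestrict_surjective.hasRightInverse
    exact ⟨fun g => s g * (s 1)⁻¹, fun g => by simp [hs g, hs 1], mul_inv_cancel _⟩
  have hmem (x : X) (g : ρ.range) : (σ g)⁻¹ * x * σ ((ρ.rangeRestrict x)⁻¹ * g) ∈ ρ.ker := by
    rw [← MonoidHom.ker_rangeRestrict, MonoidHom.mem_ker, map_mul, map_mul, map_inv, hσ, hσ]
    group
  refine ⟨ofCocycle ρ.rangeRestrict (fun x g => ψ ⟨_, hmem x g⟩) fun x y g => ?_, rfl, fun k => ?_⟩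
  · rw [← map_mul]
    congr 1
    ext
    simp [mul_assoc]
  · have hk : ρ.rangeRestrict k = 1 := Subtype.ext k.2
    show ψ ⟨_, hmem k 1⟩ = ψ k
    congr 1
    ext
    simp [hk, hσ_one]

/-- Conjugation by the indicator function `w` of `R = range (ρ ∘ φ)` fixes `inl t` exactly
when `t ∈ R`, so it separates `inl ∘ ρ` from its conjugate unless `range ρ ⊆ R`. -/
theorem range_comp_eq_of_comp_injective {A B : Type*} [Group A] [Group B] [Nontrivial D]
    (φ : A →* B) (ρ : B →* Q) (h : Injective fun ψ : B →* D ≀ᵣ Q => ψ.comp φ) :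
    (ρ.comp φ).range = ρ.range := by
  classical
  obtain ⟨d, hd⟩ := exists_ne (1 : D)
  set R := (ρ.comp φ).range
  let w : D ≀ᵣ Q := ⟨fun x => if x ∈ R then d else 1, 1⟩
  have hw (t : Q) : Commute w (inl t) ↔ t ∈ R := by
    rw [commute_mk_one_inl_iff]
    refine ⟨fun ht => by simpa [hd, w] using ht t, fun ht x => ?_⟩
    simp [R.mul_mem_cancel_left (R.inv_mem ht)]
  have hconj : (inl.comp ρ : B →* D ≀ᵣ Q) = (MulAut.conj w).toMonoidHom.comp (inl.comp ρ) :=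
    h <| MonoidHom.ext fun a => ((hw _).2 ⟨a, rfl⟩).mul_inv_cancel.symm
  refine le_antisymm (ρ.range_comp_le_range φ) ?_
  rintro _ ⟨b, rfl⟩
  exact (hw (ρ b)).1 (mul_inv_eq_iff_eq_mul.1 (DFunLike.congr_fun hconj b).symm)

end RegularWreathProduct

open RegularWreathProduct

namespace FV

variable {A B G : Type} [Group A] [Group B] [Group G] (φ : A →* B) (β : B →* G)

theorem range_comp_kerRestrict {S : Type} [Group S] (ψ : β.ker →* S)
    (hφ : ∀ ρ : B →* S ≀ᵣ β.range, (ρ.comp φ).range = ρ.range) :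
    (ψ.comp (kerRestrict φ β)).range = ψ.range := by
  obtain ⟨Θ, hΘ_right, hΘ_left⟩ := exists_comp_eq_rangeRestrict β ψ
  refine le_antisymm (ψ.range_comp_le_range _) ?_
  rintro _ ⟨k, rfl⟩
  obtain ⟨a, ha⟩ : Θ k ∈ (Θ.comp φ).range := hφ Θ ▸ ⟨k, rfl⟩
  have ha_ker : a ∈ (β.comp φ).ker := by
    have h_right : β.rangeRestrict (φ a) = β.rangeRestrict k := by
      rw [← hΘ_right]
      exact congrArg right ha
    exact (congrArg Subtype.val h_right).trans k.2
  refine ⟨⟨a, ha_ker⟩, ?_⟩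
  calc ψ (kerRestrict φ β ⟨a, ha_ker⟩) = (Θ (φ a)).left 1 := (hΘ_left _).symm
    _ = (Θ k).left 1 := by rw [← ha]; rfl
    _ = ψ k := hΘ_left k

theorem comp_kerRestrict_surjective {S : Type} [Group S]
    (hsurj : Surjective fun ρ : B →* S ≀ᵣ (β.comp φ).range => ρ.comp φ)
    (hinj : Injective fun ρ : B →* G => ρ.comp φ) :
    Surjective fun ψ : β.ker →* S => ψ.comp (kerRestrict φ β) := by
  intro ψ₀
  obtain ⟨ΘA, hΘA_right, hΘA_left⟩ := exists_comp_eq_rangeRestrict (β.comp φ) ψ₀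
  obtain ⟨ΘB, hΘB : ΘB.comp φ = ΘA⟩ := hsurj ΘA
  have hβ : (β.comp φ).range.subtype.comp (rightHom.comp ΘB) = β := hinj <| by
    simp only [MonoidHom.comp_assoc]
    rw [hΘB, hΘA_right, MonoidHom.subtype_comp_rangeRestrict]
  have hΘB_ker (k : β.ker) : ΘB k ∈ (rightHom : S ≀ᵣ _ →* _).ker := by
    rw [MonoidHom.mem_ker, ← Subtype.val_inj]
    exact (DFunLike.congr_fun hβ (k : B)).trans k.2
  refine ⟨kerEvalOne.comp ((ΘB.comp β.ker.subtype).codRestrict _ hΘB_ker), ?_⟩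
  ext a
  exact (congrArg (fun w => w.left 1) (DFunLike.congr_fun hΘB (a : A))).trans (hΘA_left a)

end FV

theorem stmt9_general (A B : Type) [Group A] [Group B] (φ : A →* B)
    (h : ∀ (S : Type) [Group S] [Finite S] [Group.IsSolvable S],
      Function.Bijective fun ψ : B →* S => ψ.comp φ)
    (G : Type) [Group G] [Finite G] [Group.IsSolvable G] (β : B →* G) :
    ∀ (S : Type) [Group S] [Finite S] [Group.IsSolvable S],
      Function.Bijective fun ψ : β.ker →* S => ψ.comp (kerRestrict φ β) := by
  have h_dense (T : Type) [Group T] [Finite T] [Group.IsSolvable T] (ρ : B →* T) :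
      (ρ.comp φ).range = ρ.range :=
    range_comp_eq_of_comp_injective (D := Multiplicative (ZMod 2)) φ ρ (h _).1
  intro S _ _ _
  exact ⟨MonoidHom.comp_injective_of_range_comp_eq _ fun ψ =>
      range_comp_kerRestrict φ β ψ (h_dense _),
    comp_kerRestrict_surjective φ β (h _).2 (h G).1⟩

/-- If `φ : A → B` induces an isomorphism of prosolvable completions of
finitely generated groups and `β : B → G` is a homomorphism to a finite solvable group, then
the restriction `φ' : ker (β ∘ φ) → ker β` of `φ` also induces an isomorphism of prosolvable
completions. -/
theorem stmt9 (A B : Type) [Group A] [Group.FG A] [Group B] [Group.FG B] (φ : A →* B)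
    (h : ∀ (S : Type) [Group S] [Finite S] [Group.IsSolvable S],
      Function.Bijective fun ψ : B →* S => ψ.comp φ)
    (G : Type) [Group G] [Finite G] [Group.IsSolvable G] (β : B →* G) :
    ∀ (S : Type) [Group S] [Finite S] [Group.IsSolvable S],
      Function.Bijective fun ψ : β.ker →* S => ψ.comp (kerRestrict φ β) :=
  stmt9_general A B φ h G β
end

section
/- Let A and B be finitely generated groups, let i: A → B be a homomorphism, let n ∈ ℕ, and suppose that for every finite solvable group T of derived length ≤ n the precomposition map i*: Hom(B,T) → Hom(A,T) is a bijection. Let S be a finite solvable group of derived length ≤ n, and let A(S) ⊆ A and B(S) ⊆ B denote the intersections of the kernels of all homomorphisms to S. Then the kernel of the composite A → B → B/B(S) equals A(S), and i induces an isomorphism A/A(S) → B/B(S). In particular, if i_-, i_+: A → B are two homomorphisms both satisfying the above bijectivity hypothesis, there exists an automorphism γ of B/B(S) such that the composite of the projection with i_+ equals γ composed with the composite of the projection with i_-. -/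
/-!
`B ⧸ B(S)` embeds into `S ^ Hom(B, S)`, a finite group of derived length `≤ n` when `B` is finitely
generated; so the hypothesis applies to `T = S`, to `T = B ⧸ B(S)` and to its subgroups. Surjectivity
of `Hom(B, S) → Hom(A, S)` identifies the kernel of `A → B ⧸ B(S)` with `A(S)`. For surjectivity of
`j : A → B ⧸ B(S)`, lift the corestriction `A → range j` along `i` to `ψ : B → range j`; by
injectivity of `Hom(B, B ⧸ B(S)) → Hom(A, B ⧸ B(S))` the projection equals `ψ` followed by the
inclusion, so its image lies in `range j`. The automorphism `γ` is the composite of the two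
resulting isomorphisms `A ⧸ A(S) ≃ B ⧸ B(S)`.
-/

namespace FV

/-- `C(H)`: the intersection of the kernels of all homomorphisms `C → H`. -/
def kerInt (C : Type) [Group C] (H : Type) [Group H] : Subgroup C :=
  ⨅ f : C →* H, f.ker

instance kerInt_normal (C : Type) [Group C] (H : Type) [Group H] : (kerInt C H).Normal := by
  constructor
  intro x hx g
  rw [kerInt, Subgroup.mem_iInf] at hx ⊢
  intro f
  have hf := hx f
  rw [MonoidHom.mem_ker] at hf ⊢
  simp [hf]

lemma kerInt_le_comap {A B : Type} [Group A] [Group B] (i : A →* B) (S : Type) [Group S] :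
    kerInt A S ≤ (kerInt B S).comap i := by
  intro a ha
  rw [kerInt, Subgroup.mem_iInf] at ha
  rw [Subgroup.mem_comap, kerInt, Subgroup.mem_iInf]
  intro f
  exact ha (f.comp i)

end FV

open FV

section DerivedSeries

variable {G H : Type*} [Group G] [Group H] {n : ℕ}

theorem derivedSeries_eq_bot_of_injective (f : G →* H) (hf : Function.Injective f)
    (h : derivedSeries H n = ⊥) : derivedSeries G n = ⊥ := by
  rw [eq_bot_iff]
  intro x hx
  have hfx : f x ∈ derivedSeries H n :=
    map_derivedSeries_le_derivedSeries f n (Subgroup.mem_map_of_mem f hx)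
  rw [h, Subgroup.mem_bot, ← map_one f] at hfx
  exact hf hfx

theorem derivedSeries_pi_eq_bot {ι : Type*} (h : derivedSeries H n = ⊥) :
    derivedSeries (ι → H) n = ⊥ := by
  rw [eq_bot_iff]
  intro x hx
  funext j
  have hxj : Pi.evalMonoidHom (fun _ : ι => H) j x ∈ derivedSeries H n :=
    map_derivedSeries_le_derivedSeries _ n (Subgroup.mem_map_of_mem _ hx)
  rwa [h, Subgroup.mem_bot] at hxj

end DerivedSeries

theorem finite_monoidHom_of_fg (B S : Type*) [Group B] [Group S] [Group.FG B] [Finite S] :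
    Finite (B →* S) := by
  obtain ⟨s, hs, hfin⟩ := Group.fg_iff.mp ‹Group.FG B›
  have : Finite s := hfin
  refine Finite.of_injective (fun f : B →* S => fun x : s => f x) fun f g hfg => ?_
  exact MonoidHom.eq_of_eqOn_dense hs fun x hx => congrFun hfg ⟨x, hx⟩

section Quotient

variable {A B : Type*} [Group A] [Group B] {M : Subgroup A} {N : Subgroup B} [M.Normal] [N.Normal]

theorem QuotientGroup.map_bijective_of_ker_eq {i : A →* B} {h : M ≤ N.comap i}
    (hker : ((QuotientGroup.mk' N).comp i).ker = M)
    (hsurj : Function.Surjective ((QuotientGroup.mk' N).comp i)) :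
    Function.Bijective (QuotientGroup.map M N i h) :=
  ⟨(QuotientGroup.injective_lift_iff _ _ _).2 hker.symm,
    QuotientGroup.lift_surjective_of_surjective _ _ hsurj _⟩

theorem QuotientGroup.exists_mulEquiv_mk_comp_eq {iminus iplus : A →* B}
    {hminus : M ≤ N.comap iminus} {hplus : M ≤ N.comap iplus}
    (hm : Function.Bijective (QuotientGroup.map M N iminus hminus))
    (hp : Function.Bijective (QuotientGroup.map M N iplus hplus)) :
    ∃ γ : (B ⧸ N) ≃* (B ⧸ N), ∀ a : A,
      (QuotientGroup.mk (iplus a) : B ⧸ N) = γ (QuotientGroup.mk (iminus a)) :=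
  ⟨(MulEquiv.ofBijective _ hm).symm.trans (MulEquiv.ofBijective _ hp), fun a => by
    have ha : (MulEquiv.ofBijective _ hm).symm (iminus a : B ⧸ N) = (a : A ⧸ M) :=
      (MulEquiv.ofBijective _ hm).symm_apply_eq.2 rfl
    rw [MulEquiv.trans_apply, ha]
    rfl⟩

end Quotient

theorem MonoidHom.surjective_comp_of_precomp {A B Q : Type*} [Group A] [Group B] [Group Q]
    (i : A →* B) (π : B →* Q) (hπ : Function.Surjective π)
    (hinj : Function.Injective fun ψ : B →* Q => ψ.comp i)
    (hsurj : Function.Surjective fun ψ : B →* (π.comp i).range => ψ.comp i) :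
    Function.Surjective (π.comp i) := by
  obtain ⟨ψ, hψ : ψ.comp i = (π.comp i).rangeRestrict⟩ := hsurj (π.comp i).rangeRestrict
  have hπψ : (π.comp i).range.subtype.comp ψ = π := by
    refine hinj ?_
    change ((π.comp i).range.subtype.comp ψ).comp i = π.comp i
    rw [MonoidHom.comp_assoc, hψ, MonoidHom.subtype_comp_rangeRestrict]
  intro q
  obtain ⟨b, rfl⟩ := hπ q
  obtain ⟨a, ha⟩ := (ψ b).2
  exact ⟨a, ha.trans (DFunLike.congr_fun hπψ b)⟩

namespace FV

section KerInt

variable {A B : Type} [Group A] [Group B] {S : Type} [Group S]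

theorem mem_kerInt_iff {b : B} : b ∈ kerInt B S ↔ ∀ f : B →* S, f b = 1 := by
  simp only [kerInt, Subgroup.mem_iInf, MonoidHom.mem_ker]

theorem kerInt_eq_ker_pi : kerInt B S = (MonoidHom.pi fun f : B →* S => f).ker := by
  ext b
  simp only [mem_kerInt_iff, MonoidHom.mem_ker, funext_iff, MonoidHom.pi_apply, Pi.one_apply]

def kerIntEmbedding (B S : Type) [Group B] [Group S] : B ⧸ kerInt B S →* ((B →* S) → S) :=
  QuotientGroup.lift _ (MonoidHom.pi fun f : B →* S => f) kerInt_eq_ker_pi.le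

theorem kerIntEmbedding_injective : Function.Injective (kerIntEmbedding B S) :=
  (QuotientGroup.injective_lift_iff _ _ _).2 kerInt_eq_ker_pi

theorem finite_quotient_kerInt [Group.FG B] [Finite S] : Finite (B ⧸ kerInt B S) :=
  have := finite_monoidHom_of_fg B S
  Finite.of_injective _ kerIntEmbedding_injective

theorem derivedSeries_quotient_kerInt_eq_bot {n : ℕ} (hS : derivedSeries S n = ⊥) :
    derivedSeries (B ⧸ kerInt B S) n = ⊥ :=
  derivedSeries_eq_bot_of_injective _ kerIntEmbedding_injective (derivedSeries_pi_eq_bot hS)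

theorem ker_mk_comp_eq_kerInt (i : A →* B)
    (hi : Function.Surjective fun ψ : B →* S => ψ.comp i) :
    ((QuotientGroup.mk' (kerInt B S)).comp i).ker = kerInt A S := by
  refine le_antisymm (fun a ha => ?_) fun a ha =>
    (QuotientGroup.eq_one_iff _).2 (kerInt_le_comap i S ha)
  rw [MonoidHom.mem_ker, MonoidHom.comp_apply, QuotientGroup.mk'_apply,
    QuotientGroup.eq_one_iff, mem_kerInt_iff] at ha
  rw [mem_kerInt_iff]
  intro g
  obtain ⟨ψ, rfl⟩ := hi g
  exact ha ψ

end KerInt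

section PrecompBijective

variable {A B : Type} [Group A] [Group B]

def PrecompBijective (n : ℕ) (i : A →* B) : Prop :=
  ∀ (T : Type) [Group T] [Finite T] [Group.IsSolvable T], derivedSeries T n = ⊥ →
    Function.Bijective fun ψ : B →* T => ψ.comp i

variable {n : ℕ} {i : A →* B} {S : Type} [Group S] [Finite S]

theorem PrecompBijective.bijective (hi : PrecompBijective n i) (T : Type) [Group T] [Finite T]
    (hT : derivedSeries T n = ⊥) : Function.Bijective fun ψ : B →* T => ψ.comp i :=
  have : Group.IsSolvable T := ⟨⟨n, hT⟩⟩
  hi T hT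

theorem PrecompBijective.ker_mk_comp_eq_kerInt (hi : PrecompBijective n i)
    (hS : derivedSeries S n = ⊥) :
    ((QuotientGroup.mk' (kerInt B S)).comp i).ker = kerInt A S :=
  FV.ker_mk_comp_eq_kerInt i (hi.bijective S hS).2

theorem PrecompBijective.mk_comp_surjective [Group.FG B] (hi : PrecompBijective n i)
    (hS : derivedSeries S n = ⊥) :
    Function.Surjective ((QuotientGroup.mk' (kerInt B S)).comp i) := by
  have : Finite (B ⧸ kerInt B S) := finite_quotient_kerInt
  have hQ := derivedSeries_quotient_kerInt_eq_bot (B := B) hS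
  refine MonoidHom.surjective_comp_of_precomp i _ (QuotientGroup.mk'_surjective _)
    (hi.bijective _ hQ).1 (hi.bijective _ ?_).2
  exact derivedSeries_eq_bot_of_injective _ (Subgroup.subtype_injective _) hQ

theorem PrecompBijective.map_kerInt_bijective [Group.FG B] (hi : PrecompBijective n i)
    (hS : derivedSeries S n = ⊥) :
    Function.Bijective (QuotientGroup.map (kerInt A S) (kerInt B S) i (kerInt_le_comap i S)) :=
  QuotientGroup.map_bijective_of_ker_eq (hi.ker_mk_comp_eq_kerInt hS) (hi.mk_comp_surjective hS)

end PrecompBijective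

end FV

theorem stmt13_general (A B : Type) [Group A] [Group B] [Group.FG B]
    (n : ℕ) (S : Type) [Group S] [Finite S] (hS : derivedSeries S n = ⊥)
    (i : A →* B)
    (hi : ∀ (T : Type) [Group T] [Finite T] [Group.IsSolvable T], derivedSeries T n = ⊥ →
      Function.Bijective fun ψ : B →* T => ψ.comp i) :
    ((QuotientGroup.mk' (kerInt B S)).comp i).ker = kerInt A S ∧
    Function.Bijective
      (QuotientGroup.map (kerInt A S) (kerInt B S) i (kerInt_le_comap i S)) ∧
    (∀ iminus iplus : A →* B,
      (∀ (T : Type) [Group T] [Finite T] [Group.IsSolvable T], derivedSeries T n = ⊥ →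
        Function.Bijective fun ψ : B →* T => ψ.comp iminus) →
      (∀ (T : Type) [Group T] [Finite T] [Group.IsSolvable T], derivedSeries T n = ⊥ →
        Function.Bijective fun ψ : B →* T => ψ.comp iplus) →
      ∃ γ : (B ⧸ kerInt B S) ≃* (B ⧸ kerInt B S),
        ∀ a : A, (QuotientGroup.mk (iplus a) : B ⧸ kerInt B S)
          = γ (QuotientGroup.mk (iminus a))) :=
  ⟨PrecompBijective.ker_mk_comp_eq_kerInt hi hS, PrecompBijective.map_kerInt_bijective hi hS,
    fun _ _ hminus hplus => QuotientGroup.exists_mulEquiv_mk_comp_eq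
      (PrecompBijective.map_kerInt_bijective hminus hS)
      (PrecompBijective.map_kerInt_bijective hplus hS)⟩

/-- Let `i : A → B` be a homomorphism of finitely generated groups such that
`Hom(B,T) → Hom(A,T)` is bijective for every finite solvable `T` of derived length `≤ n`, and
let `S` be a finite solvable group of derived length `≤ n`.  Then the kernel of
`A → B → B/B(S)` equals `A(S)` and `i` induces an isomorphism `A/A(S) → B/B(S)`; moreover, if
`i₋, i₊ : A → B` both satisfy the bijectivity hypothesis, there is an automorphism `γ` of
`B/B(S)` with `proj ∘ i₊ = γ ∘ proj ∘ i₋`. -/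
theorem stmt13 (A B : Type) [Group A] [Group.FG A] [Group B] [Group.FG B]
    (n : ℕ) (S : Type) [Group S] [Finite S] [Group.IsSolvable S] (hS : derivedSeries S n = ⊥)
    (i : A →* B)
    (hi : ∀ (T : Type) [Group T] [Finite T] [Group.IsSolvable T], derivedSeries T n = ⊥ →
      Function.Bijective fun ψ : B →* T => ψ.comp i) :
    ((QuotientGroup.mk' (kerInt B S)).comp i).ker = kerInt A S ∧
    Function.Bijective
      (QuotientGroup.map (kerInt A S) (kerInt B S) i (kerInt_le_comap i S)) ∧
    (∀ iminus iplus : A →* B,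
      (∀ (T : Type) [Group T] [Finite T] [Group.IsSolvable T], derivedSeries T n = ⊥ →
        Function.Bijective fun ψ : B →* T => ψ.comp iminus) →
      (∀ (T : Type) [Group T] [Finite T] [Group.IsSolvable T], derivedSeries T n = ⊥ →
        Function.Bijective fun ψ : B →* T => ψ.comp iplus) →
      ∃ γ : (B ⧸ kerInt B S) ≃* (B ⧸ kerInt B S),
        ∀ a : A, (QuotientGroup.mk (iplus a) : B ⧸ kerInt B S)
          = γ (QuotientGroup.mk (iminus a))) :=
  stmt13_general A B n S hS i hi
end
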